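/- If CPC proves φ(p,r) → ψ(p,s) and ψ(p,s) is monotone in the variables p, then IPC proves ⋀ᵢ(pᵢ ∨ qᵢ) → (¬φ(¬p, r) ∨ ¬¬ψ(q, s)), where ¬p denotes the tuple of negated variables ¬p₁,…,¬p_m and q = q₁,…,q_m are fresh variables. -/

import Mathlib

/-! ## Basic machinery: strings, polynomial time, NP, circuits, formulas -/

/-- The trivial finite encoding of binary strings over the alphabet `Bool`. -/
def listBoolEncoding : Computability.Encoding (List Bool) Bool where
  encode := id
  decode := fun l => some l
  decode_encode := fun _ => rfl

/-- A function on binary strings is polynomial-time computable if some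
two-stack Turing machine computes it in polynomial time. -/
def PolyTimeComputable (f : List Bool → List Bool) : Prop :=
  Nonempty (Turing.TM2ComputableInPolyTime listBoolEncoding.encode listBoolEncoding.encode f)

/-- An injective pairing of binary strings. -/
def pairEnc (u w : List Bool) : List Bool :=
  (u.map fun b => [true, b]).flatten ++ false :: w

/-- A predicate on binary strings is polynomial-time decidable. -/
def PolyTimeDecidable (P : List Bool → Prop) : Prop :=
  ∃ f, PolyTimeComputable f ∧ ∀ w, P w ↔ f w = [true]

/-- A binary predicate on binary strings is polynomial-time decidable. -/
def PolyTimeDecidable2 (P : List Bool → List Bool → Prop) : Prop :=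
  ∃ f, PolyTimeComputable f ∧ ∀ u w, P u w ↔ f (pairEnc u w) = [true]

/-- `L ∈ NP`: there are a polynomial-time decidable binary predicate `R` and a
polynomial `p` with `w ∈ L` iff some witness `u` with `|u| ≤ p (|w|)` satisfies `R u w`. -/
def InNP (L : Set (List Bool)) : Prop :=
  ∃ (R : List Bool → List Bool → Prop) (p : Polynomial ℕ),
    PolyTimeDecidable2 R ∧ ∀ w, w ∈ L ↔ ∃ u, u.length ≤ p.eval w.length ∧ R u w

/-- `L ∈ P`. -/
def InP (L : Set (List Bool)) : Prop := PolyTimeDecidable (· ∈ L)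

/-- A gate of a Boolean circuit with `s` gates: a constant, an input gate reading
input variable `a : ℕ`, or a negation/conjunction/disjunction of earlier gates. -/
inductive CGate (s : ℕ) : Type where
  | const : Bool → CGate s
  | input : ℕ → CGate s
  | not : Fin s → CGate s
  | and : Fin s → Fin s → CGate s
  | or : Fin s → Fin s → CGate s

/-- The gates referenced by a gate. -/
def CGate.deps {s : ℕ} : CGate s → List (Fin s)
  | .const _ => []
  | .input _ => []
  | .not j => [j]
  | .and j k => [j, k]
  | .or j k => [j, k]

/-- A Boolean circuit (as a DAG of gates, without a chosen output). -/
structure CircuitBase where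
  size : ℕ
  gates : Fin size → CGate size
  wf : ∀ i : Fin size, ∀ j ∈ (gates i).deps, (j : ℕ) < (i : ℕ)

/-- Evaluate gate `i` of a circuit under an assignment `v` to the input variables. -/
def CircuitBase.evalGate (c : CircuitBase) (v : ℕ → Bool) (i : Fin c.size) : Bool :=
  match h : c.gates i with
  | .const b => b
  | .input a => v a
  | .not j => !(c.evalGate v j)
  | .and j k => c.evalGate v j && c.evalGate v k
  | .or j k => c.evalGate v j || c.evalGate v k
termination_by (i : ℕ)
decreasing_by
  · exact c.wf i j (by rw [h]; simp [CGate.deps])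
  · exact c.wf i j (by rw [h]; simp [CGate.deps])
  · exact c.wf i k (by rw [h]; simp [CGate.deps])
  · exact c.wf i j (by rw [h]; simp [CGate.deps])
  · exact c.wf i k (by rw [h]; simp [CGate.deps])

/-- The circuit reads only input variables from `S`. -/
def CircuitBase.InputsIn (c : CircuitBase) (S : Set ℕ) : Prop :=
  ∀ (i : Fin c.size) (a : ℕ), c.gates i = CGate.input a → a ∈ S

/-- A monotone circuit: no negation gates. -/
def CircuitBase.MonotoneC (c : CircuitBase) : Prop :=
  ∀ (i j : Fin c.size), c.gates i ≠ CGate.not j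

/-- A single-output Boolean circuit. -/
structure Circuit extends CircuitBase where
  out : Fin size

/-- Evaluate a circuit on an assignment to the input variables. -/
def Circuit.eval (c : Circuit) (v : ℕ → Bool) : Bool :=
  c.toCircuitBase.evalGate v c.out

/-- A multi-output Boolean circuit. -/
structure MultiCircuit extends CircuitBase where
  outs : List (Fin size)

/-- Evaluate a multi-output circuit on an assignment to the input variables. -/
def MultiCircuit.eval (c : MultiCircuit) (v : ℕ → Bool) : List Bool :=
  c.outs.map (c.toCircuitBase.evalGate v)

/-- `pad_m(w) = 1w₁1w₂…1w_l 0…0` of total length `2m`. -/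
def padBits (m : ℕ) (w : List Bool) : List Bool :=
  (w.map fun b => [true, b]).flatten ++ List.replicate (2 * m - 2 * w.length) false

/-- A function on binary strings is computable by polynomial-size circuits:
a family `Cₙ` of multi-output circuits of size polynomial in `n`, where
`Cₙ` reads input bits `0,…,n-1` and outputs the padded value of `f` on
every input of length `n`. -/
def PolySizeComputable (f : List Bool → List Bool) : Prop :=
  ∃ (C : ℕ → MultiCircuit) (outLen : ℕ → ℕ) (p : Polynomial ℕ),
    ∀ n, (C n).size ≤ p.eval n ∧ (C n).toCircuitBase.InputsIn {a | a < n} ∧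
      ∀ w : List Bool, w.length = n →
        (f w).length ≤ outLen n ∧
        (C n).eval (fun a => w.getD a false) = padBits (outLen n) (f w)

/-- `L ∈ P/poly`: a polynomial-size circuit family decides membership in `L`. -/
def InPPoly (L : Set (List Bool)) : Prop :=
  ∃ (C : ℕ → Circuit) (p : Polynomial ℕ),
    ∀ n, (C n).size ≤ p.eval n ∧ (C n).toCircuitBase.InputsIn {a | a < n} ∧
      ∀ w : List Bool, w.length = n →
        (w ∈ L ↔ (C n).eval (fun a => w.getD a false) = true)

/-- A proof system for a language `L`: a polynomial-time decidable binary relation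
`Pr` such that `w ∈ L` iff `w` has a `Pr`-proof. -/
def IsProofSystem (Pr : List Bool → List Bool → Prop) (L : Set (List Bool)) : Prop :=
  PolyTimeDecidable2 Pr ∧ ∀ w, w ∈ L ↔ ∃ u, Pr u w

/-- A proof system is polynomially bounded if every member of `L` has a proof of
size polynomial in its length. -/
def PolyBounded (Pr : List Bool → List Bool → Prop) (L : Set (List Bool)) : Prop :=
  ∃ p : Polynomial ℕ, ∀ w ∈ L, ∃ u, Pr u w ∧ u.length ≤ p.eval w.length

/-- One-way protocols. -/
structure OneWayProtocol where
  /-- the polynomial-time decidable predicate of source data -/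
  Pred : List Bool → Prop
  /-- the public transformation -/
  h : List Bool → List Bool
  /-- the derived secret information -/
  k : List Bool → List Bool
  /-- computes (in unary) the length of `k u` from `h u` -/
  lenFun : List Bool → List Bool
  /-- the bounding polynomial -/
  bnd : Polynomial ℕ
  pred_dec : PolyTimeDecidable Pred
  h_poly : PolyTimeComputable h
  k_poly : PolyTimeComputable k
  lenFun_poly : PolyTimeComputable lenFun
  /-- semi-injectivity -/
  semi_inj : ∀ u₁ u₂, Pred u₁ → Pred u₂ → h u₁ = h u₂ → k u₁ = k u₂
  /-- `|k u|` is polynomial-time computable from `h u` -/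
  len_eq : ∀ u, (k u).length = (lenFun (h u)).length
  /-- boundedness: `|u| ≤ bnd (|h u|)` -/
  bounded : ∀ u, u.length ≤ bnd.eval (h u).length
  /-- security against `P/poly` adversaries -/
  secure : ¬ ∃ f : List Bool → List Bool, PolySizeComputable f ∧ ∀ u, k u = f (h u)

/-! ## Propositional formulas -/

/-- Propositional formulas over `{⊤, ⊥, ∧, ∨, →}` with variables indexed by `ℕ`. -/
inductive PropForm : Type where
  | tr : PropForm
  | fls : PropForm
  | var : ℕ → PropForm
  | and : PropForm → PropForm → PropForm
  | or : PropForm → PropForm → PropForm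
  | imp : PropForm → PropForm → PropForm
deriving DecidableEq

/-- Negation abbreviates `φ → ⊥`. -/
def PropForm.neg (φ : PropForm) : PropForm := φ.imp .fls

/-- Classical Boolean evaluation of a formula. -/
def PropForm.eval (v : ℕ → Bool) : PropForm → Bool
  | .tr => true
  | .fls => false
  | .var a => v a
  | .and φ ψ => φ.eval v && ψ.eval v
  | .or φ ψ => φ.eval v || ψ.eval v
  | .imp φ ψ => !(φ.eval v) || ψ.eval v

/-- A classical tautology. -/
def PropForm.Taut (φ : PropForm) : Prop := ∀ v, φ.eval v = true

/-- The variables occurring in a formula. -/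
def PropForm.vars : PropForm → Finset ℕ
  | .tr => ∅
  | .fls => ∅
  | .var a => {a}
  | .and φ ψ => φ.vars ∪ ψ.vars
  | .or φ ψ => φ.vars ∪ ψ.vars
  | .imp φ ψ => φ.vars ∪ ψ.vars

/-- The size of a formula. -/
def PropForm.size : PropForm → ℕ
  | .tr => 1
  | .fls => 1
  | .var _ => 1
  | .and φ ψ => φ.size + ψ.size + 1
  | .or φ ψ => φ.size + ψ.size + 1
  | .imp φ ψ => φ.size + ψ.size + 1

/-- Substitution of formulas for variables. -/
def PropForm.subst (σ : ℕ → PropForm) : PropForm → PropForm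
  | .tr => .tr
  | .fls => .fls
  | .var a => σ a
  | .and φ ψ => .and (φ.subst σ) (ψ.subst σ)
  | .or φ ψ => .or (φ.subst σ) (ψ.subst σ)
  | .imp φ ψ => .imp (φ.subst σ) (ψ.subst σ)

/-- A monotone formula: built from atoms, `⊤`, `⊥`, `∧`, `∨` only (no implication). -/
def PropForm.IsMonotone : PropForm → Prop
  | .tr => True
  | .fls => True
  | .var _ => True
  | .and φ ψ => φ.IsMonotone ∧ ψ.IsMonotone
  | .or φ ψ => φ.IsMonotone ∧ ψ.IsMonotone
  | .imp _ _ => False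

/-- `MonoIn P b φ` holds if every occurrence in `φ` of a variable from `P` has
polarity allowed by `b` (`b = true`: positive occurrences only are constrained;
a variable of `P` may occur with polarity `b` but not opposite).
`MonoIn P true φ` says `φ` is monotone in the variables of `P`
(no negated occurrence of a `P`-variable in negation normal form). -/
def MonoIn (P : Finset ℕ) : Bool → PropForm → Prop
  | _, .tr => True
  | _, .fls => True
  | b, .var a => b = true ∨ a ∉ P
  | b, .and φ ψ => MonoIn P b φ ∧ MonoIn P b ψ
  | b, .or φ ψ => MonoIn P b φ ∧ MonoIn P b ψ
  | b, .imp φ ψ => MonoIn P (!b) φ ∧ MonoIn P b ψ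

/-- Conjunction of a list of formulas. -/
def conjList (Γ : List PropForm) : PropForm := Γ.foldr PropForm.and .tr

/-- Disjunction of a list of formulas. -/
def disjList (Δ : List PropForm) : PropForm := Δ.foldr PropForm.or .fls

/-- `⋀_{i<m} (pᵢ ∨ ¬pᵢ)`. -/
def excludedMiddleConj (m : ℕ) : PropForm :=
  conjList ((List.range m).map fun i => (PropForm.var i).or (PropForm.var i).neg)

/-- Hilbert-style provability in intuitionistic propositional logic `IPC`. -/
inductive IPC : PropForm → Prop
  | mp {φ ψ : PropForm} : IPC (φ.imp ψ) → IPC φ → IPC ψ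
  | ax1 (φ ψ : PropForm) : IPC (φ.imp (ψ.imp φ))
  | ax2 (φ ψ χ : PropForm) : IPC ((φ.imp (ψ.imp χ)).imp ((φ.imp ψ).imp (φ.imp χ)))
  | axAndI (φ ψ : PropForm) : IPC (φ.imp (ψ.imp (φ.and ψ)))
  | axAndL (φ ψ : PropForm) : IPC ((φ.and ψ).imp φ)
  | axAndR (φ ψ : PropForm) : IPC ((φ.and ψ).imp ψ)
  | axOrL (φ ψ : PropForm) : IPC (φ.imp (φ.or ψ))
  | axOrR (φ ψ : PropForm) : IPC (ψ.imp (φ.or ψ))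
  | axOrE (φ ψ χ : PropForm) : IPC ((φ.imp χ).imp ((ψ.imp χ).imp ((φ.or ψ).imp χ)))
  | axFls (φ : PropForm) : IPC (PropForm.fls.imp φ)
  | axTr : IPC .tr

/-- Unary encoding of a natural number as a binary string. -/
def natBits (n : ℕ) : List Bool := List.replicate n true ++ [false]

/-- An encoding of propositional formulas as binary strings. -/
def PropForm.encode : PropForm → List Bool
  | .tr => [false, false, false]
  | .fls => [false, false, true]
  | .var a => [false, true] ++ natBits a
  | .and φ ψ => [true, false, false] ++ φ.encode ++ ψ.encode
  | .or φ ψ => [true, false, true] ++ φ.encode ++ ψ.encode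
  | .imp φ ψ => [true, true] ++ φ.encode ++ ψ.encode

/-- The language of (codes of) classical propositional tautologies. -/
def CPClang : Set (List Bool) := {w | ∃ φ : PropForm, φ.Taut ∧ w = φ.encode}

/-- The formula computed by a circuit (unfolding the DAG into a tree). -/
def CircuitBase.gateForm (c : CircuitBase) (i : Fin c.size) : PropForm :=
  match h : c.gates i with
  | .const b => if b then .tr else .fls
  | .input a => .var a
  | .not j => (c.gateForm j).neg
  | .and j k => (c.gateForm j).and (c.gateForm k)
  | .or j k => (c.gateForm j).or (c.gateForm k)
termination_by (i : ℕ)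
decreasing_by
  · exact c.wf i j (by rw [h]; simp [CGate.deps])
  · exact c.wf i j (by rw [h]; simp [CGate.deps])
  · exact c.wf i k (by rw [h]; simp [CGate.deps])
  · exact c.wf i j (by rw [h]; simp [CGate.deps])
  · exact c.wf i k (by rw [h]; simp [CGate.deps])

/-- The formula `[C]` of a single-output circuit `C`. -/
def Circuit.toForm (c : Circuit) : PropForm := c.toCircuitBase.gateForm c.out

/-- `[C]` is a Craig interpolant for `φ → ψ`: `C` reads only the shared
variables, and for every assignment `v`, `φ(v) = 1` implies `C(v) = 1`, and
`C(v) = 1` implies `ψ(v) = 1`. -/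
def Interpolates (C : Circuit) (φ ψ : PropForm) : Prop :=
  C.toCircuitBase.InputsIn {a | a ∈ φ.vars ∩ ψ.vars} ∧
  ∀ v : ℕ → Bool, (φ.eval v = true → C.eval v = true) ∧ (C.eval v = true → ψ.eval v = true)

/-- Feasible interpolation of a proof system for `CPC`: from any proof of an
implication one obtains an interpolating circuit of polynomial size. -/
def FeasibleInterpolation (Pr : List Bool → List Bool → Prop) : Prop :=
  ∃ s : Polynomial ℕ, ∀ (φ ψ : PropForm) (u : List Bool),
    Pr u (φ.imp ψ).encode →
    ∃ C : Circuit,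
      C.size ≤ s.eval (u.length + (φ.imp ψ).encode.length) ∧ Interpolates C φ ψ

/-! ## Horn formulas -/

/-- A conjunction of atoms. -/
inductive AtomConj : PropForm → Prop
  | var (a : ℕ) : AtomConj (.var a)
  | and {φ ψ : PropForm} : AtomConj φ → AtomConj ψ → AtomConj (φ.and ψ)

/-- An implicational Horn formula: an atom, or `(p₁ ∧ … ∧ p_k) → r` with all
`pᵢ` and `r` atoms. -/
inductive IsHorn : PropForm → Prop
  | atom (a : ℕ) : IsHorn (.var a)
  | imp {φ : PropForm} (r : ℕ) : AtomConj φ → IsHorn (φ.imp (.var r))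

/-! ## Modal formulas -/

/-- Modal propositional formulas. -/
inductive ModalForm : Type where
  | tr : ModalForm
  | fls : ModalForm
  | var : ℕ → ModalForm
  | and : ModalForm → ModalForm → ModalForm
  | or : ModalForm → ModalForm → ModalForm
  | imp : ModalForm → ModalForm → ModalForm
  | box : ModalForm → ModalForm
deriving DecidableEq

/-- Modal negation. -/
def ModalForm.neg (φ : ModalForm) : ModalForm := φ.imp .fls

/-- Substitution for modal formulas. -/
def ModalForm.subst (σ : ℕ → ModalForm) : ModalForm → ModalForm
  | .tr => .tr
  | .fls => .fls
  | .var a => σ a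
  | .and φ ψ => .and (φ.subst σ) (ψ.subst σ)
  | .or φ ψ => .or (φ.subst σ) (ψ.subst σ)
  | .imp φ ψ => .imp (φ.subst σ) (ψ.subst σ)
  | .box φ => .box (φ.subst σ)

/-- The forgetful translation (`□φ ↦ φ`). -/
def ModalForm.forget : ModalForm → PropForm
  | .tr => .tr
  | .fls => .fls
  | .var a => .var a
  | .and φ ψ => .and φ.forget ψ.forget
  | .or φ ψ => .or φ.forget ψ.forget
  | .imp φ ψ => .imp φ.forget ψ.forget
  | .box φ => φ.forget

/-- The collapse translation (`□φ ↦ ⊤`). -/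
def ModalForm.collapse : ModalForm → PropForm
  | .tr => .tr
  | .fls => .fls
  | .var a => .var a
  | .and φ ψ => .and φ.collapse ψ.collapse
  | .or φ ψ => .or φ.collapse ψ.collapse
  | .imp φ ψ => .imp φ.collapse ψ.collapse
  | .box _ => .tr

/-- Hilbert-style provability in the normal modal logic `K` extended by the
axioms in `Ax` (closed under substitution): a classical propositional base,
the distribution axiom, modus ponens, necessitation and substitution. -/
inductive KExt (Ax : Set ModalForm) : ModalForm → Prop
  | axiom' {φ : ModalForm} : φ ∈ Ax → KExt Ax φ
  | mp {φ ψ : ModalForm} : KExt Ax (φ.imp ψ) → KExt Ax φ → KExt Ax ψ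
  | nec {φ : ModalForm} : KExt Ax φ → KExt Ax φ.box
  | subst {φ : ModalForm} (σ : ℕ → ModalForm) : KExt Ax φ → KExt Ax (φ.subst σ)
  | ax1 (φ ψ : ModalForm) : KExt Ax (φ.imp (ψ.imp φ))
  | ax2 (φ ψ χ : ModalForm) : KExt Ax ((φ.imp (ψ.imp χ)).imp ((φ.imp ψ).imp (φ.imp χ)))
  | axAndI (φ ψ : ModalForm) : KExt Ax (φ.imp (ψ.imp (φ.and ψ)))
  | axAndL (φ ψ : ModalForm) : KExt Ax ((φ.and ψ).imp φ)
  | axAndR (φ ψ : ModalForm) : KExt Ax ((φ.and ψ).imp ψ)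
  | axOrL (φ ψ : ModalForm) : KExt Ax (φ.imp (φ.or ψ))
  | axOrR (φ ψ : ModalForm) : KExt Ax (ψ.imp (φ.or ψ))
  | axOrE (φ ψ χ : ModalForm) : KExt Ax ((φ.imp χ).imp ((ψ.imp χ).imp ((φ.or ψ).imp χ)))
  | axFls (φ : ModalForm) : KExt Ax (ModalForm.fls.imp φ)
  | axTr : KExt Ax .tr
  | axDNE (φ : ModalForm) : KExt Ax (φ.neg.neg.imp φ)
  | axK (φ ψ : ModalForm) : KExt Ax (((φ.imp ψ).box).imp (φ.box.imp ψ.box))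

/-- Provability in the basic modal logic `K`. -/
def KProof : ModalForm → Prop := KExt ∅

/-! ## Automatability -/

/-- A proof system for `CPC` is substitutable: substituting constants for some
of the variables transforms proofs with polynomial overhead. -/
def Substitutable (Pr : List Bool → List Bool → Prop) : Prop :=
  ∃ l : Polynomial ℕ, ∀ (φ : PropForm) (σ : ℕ → PropForm) (u : List Bool),
    (∀ a, σ a = .var a ∨ σ a = .tr ∨ σ a = .fls) →
    Pr u φ.encode →
    ∃ u', Pr u' (φ.subst σ).encode ∧ u'.length ≤ l.eval (u.length + φ.encode.length)

/-- Closure under variable-free modus ponens: from a proof of `φ → ψ` with `φ` a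
variable-free tautology one obtains a proof of `ψ` with polynomial overhead. -/
def ClosedUnderVarFreeMP (Pr : List Bool → List Bool → Prop) : Prop :=
  ∃ m : Polynomial ℕ, ∀ (φ ψ : PropForm) (u : List Bool),
    φ.vars = ∅ → φ.Taut → Pr u (φ.imp ψ).encode →
    ∃ u', Pr u' ψ.encode ∧ u'.length ≤ m.eval (u.length + (φ.imp ψ).encode.length)

/-- Automatability (padded formulation): a polynomial-time algorithm which, given a
formula `φ` together with (in unary) any bound `b` on the size of some `Pr`-proof of
`φ`, outputs a `Pr`-proof of `φ`; its running time is thus polynomial in `|φ|` and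
the size of the shortest proof of `φ`. -/
def Automatable (Pr : List Bool → List Bool → Prop) : Prop :=
  ∃ A : List Bool → List Bool, PolyTimeComputable A ∧
    ∀ (φ : PropForm) (b : ℕ),
      (∃ u, Pr u φ.encode ∧ u.length ≤ b) →
      Pr (A (pairEnc φ.encode (List.replicate b true))) φ.encode

/-! ## Frege systems -/

/-- An inference rule: finitely many premises and a conclusion. -/
structure FregeRule : Type where
  prems : List PropForm
  concl : PropForm

/-- `π` is a derivation from assumptions `Γ` in the inference system `F`: every
line is an assumption or follows from earlier lines by a substitution instance
of a rule of `F`. -/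
def IsDerivation (F : List FregeRule) (Γ : List PropForm) (π : List PropForm) : Prop :=
  ∀ (i : ℕ) (hi : i < π.length),
    π.get ⟨i, hi⟩ ∈ Γ ∨
    ∃ R ∈ F, ∃ σ : ℕ → PropForm,
      π.get ⟨i, hi⟩ = R.concl.subst σ ∧
      ∀ p ∈ R.prems, ∃ (j : ℕ) (hj : j < π.length), j < i ∧ π.get ⟨j, hj⟩ = p.subst σ

/-- `φ` is derivable from `Γ` in the inference system `F`. -/
def FregeProves (F : List FregeRule) (Γ : List PropForm) (φ : PropForm) : Prop :=
  ∃ π : List PropForm, IsDerivation F Γ π ∧ φ ∈ π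

/-- The size of a derivation: the total size of its formulas. -/
def derivSize (π : List PropForm) : ℕ := (π.map PropForm.size).sum

/-! ## Graphs encoded as binary strings -/

/-- Adjacency in the graph on `n` vertices encoded by a binary string of length
`n(n-1)/2` (the entry for the pair `{i, j}` with `i < j` is at position
`j(j-1)/2 + i`). -/
def adjOf (w : List Bool) (i j : ℕ) : Bool :=
  if i < j then w.getD (j * (j - 1) / 2 + i) false
  else if j < i then w.getD (i * (i - 1) / 2 + j) false
  else false

/-- The graph encoded by `w` (on `n` vertices) contains a `k`-clique. -/
def HasClique (w : List Bool) (n k : ℕ) : Prop :=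
  ∃ f : Fin k → Fin n, Function.Injective f ∧
    ∀ a b : Fin k, a ≠ b → adjOf w (f a) (f b) = true

/-- The graph encoded by `w` (on `n` vertices) has a proper `l`-coloring. -/
def HasColoring (w : List Bool) (n l : ℕ) : Prop :=
  ∃ c : Fin n → Fin l, ∀ i j : Fin n, adjOf w (i : ℕ) (j : ℕ) = true → c i ≠ c j

/-- The language of graphs (on `n ≥ n₀` vertices) containing a `K(n)`-clique. -/
def CliqueLang (n₀ : ℕ) (K : ℕ → ℕ) : Set (List Bool) :=
  {w | ∃ n, n₀ ≤ n ∧ w.length = n * (n - 1) / 2 ∧ HasClique w n (K n)}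

/-- The language of graphs (on `n ≥ n₀` vertices) that are `L(n)`-colorable. -/
def ColorLang (n₀ : ℕ) (L : ℕ → ℕ) : Set (List Bool) :=
  {w | ∃ n, n₀ ≤ n ∧ w.length = n * (n - 1) / 2 ∧ HasColoring w n (L n)}

/-! ## Substitutions used for the intuitionistic translations -/

/-- The substitution replacing `pᵢ` (`i < m`) by `¬pᵢ`. -/
def negSubst (m : ℕ) : ℕ → PropForm :=
  fun a => if a < m then (PropForm.var a).neg else PropForm.var a

/-- The substitution replacing `pᵢ` (`i < m`) by the fresh variable `q_i := p_{m+i}`. -/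
def shiftSubst (m : ℕ) : ℕ → PropForm :=
  fun a => if a < m then PropForm.var (m + a) else PropForm.var a

/-- `⋀_{i<m} (pᵢ ∨ qᵢ)` where `qᵢ := p_{m+i}`. -/
def pairDisjConj (m : ℕ) : PropForm :=
  conjList ((List.range m).map fun i => (PropForm.var i).or (PropForm.var (m + i)))

/-!
On the hypothesis `⋀ᵢ (pᵢ ∨ qᵢ)` one argues by cases, in each branch assuming `pᵢ` for `i` in
some set `I` and `qᵢ` for the remaining `i`. In such a branch `¬pᵢ` is equivalent to `⊥` for
`i ∈ I`, so `φ(¬p, r)` is equivalent to `φ(σ_I)`, where `σ_I` sends `pᵢ` to `⊥` for `i ∈ I` and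
to `¬pᵢ` otherwise. If `φ(σ_I)` is classically unsatisfiable, Glivenko's theorem gives
`¬φ(σ_I)` and hence the left disjunct. Otherwise a satisfying assignment yields truth values
`u` of the `pᵢ` making `φ` true; since `φ` and `ψ` share only `p`, the formula `ψ(u, s)` is a
tautology and Glivenko's theorem gives `¬¬ψ(u, s)`. The value `u i` is true only for `i ∉ I`,
where `qᵢ` is assumed, so monotonicity of `ψ` turns this into `¬¬ψ(q, s)`.
-/

open PropForm

theorem IPC.imp_self (φ : PropForm) : IPC (φ.imp φ) :=
  .mp (.mp (.ax2 φ (φ.imp φ) φ) (.ax1 φ (φ.imp φ))) (.ax1 φ φ)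

inductive Deriv : List PropForm → PropForm → Prop
  | hyp {Γ : List PropForm} {φ : PropForm} : φ ∈ Γ → Deriv Γ φ
  | ipc {Γ : List PropForm} {φ : PropForm} : IPC φ → Deriv Γ φ
  | mp {Γ : List PropForm} {φ ψ : PropForm} : Deriv Γ (φ.imp ψ) → Deriv Γ φ → Deriv Γ ψ

namespace Deriv

variable {Γ Δ : List PropForm} {φ φ' ψ ψ' χ : PropForm}

theorem weaken (h : Deriv Γ φ) (hΓΔ : Γ ⊆ Δ) : Deriv Δ φ := by
  induction h with
  | hyp h => exact .hyp (hΓΔ h)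
  | ipc h => exact .ipc h
  | mp _ _ ih₁ ih₂ => exact .mp ih₁ ih₂

theorem cons (h : Deriv Γ φ) : Deriv (ψ :: Γ) φ :=
  h.weaken (List.subset_cons_self ψ Γ)

theorem head : Deriv (φ :: Γ) φ :=
  .hyp List.mem_cons_self

theorem imp_self : Deriv Γ (φ.imp φ) :=
  .ipc (IPC.imp_self φ)

theorem imp_intro (h : Deriv (φ :: Γ) ψ) : Deriv Γ (φ.imp ψ) := by
  generalize hΔ : φ :: Γ = Δ at h
  induction h with
  | hyp hm =>
    subst hΔ
    rcases List.mem_cons.mp hm with rfl | hm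
    · exact imp_self
    · exact .mp (.ipc (.ax1 _ _)) (.hyp hm)
  | ipc h => exact .mp (.ipc (.ax1 _ _)) (.ipc h)
  | mp _ _ ih₁ ih₂ => exact .mp (.mp (.ipc (.ax2 _ _ _)) ih₁) ih₂

theorem toIPC (h : Deriv [] φ) : IPC φ := by
  generalize hΓ : ([] : List PropForm) = Γ at h
  induction h with
  | hyp hm => subst hΓ; simp at hm
  | ipc h => exact h
  | mp _ _ ih₁ ih₂ => exact .mp ih₁ ih₂

theorem exfalso (h : Deriv Γ .fls) : Deriv Γ φ :=
  .mp (.ipc (.axFls φ)) h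

theorem andI (h₁ : Deriv Γ φ) (h₂ : Deriv Γ ψ) : Deriv Γ (φ.and ψ) :=
  .mp (.mp (.ipc (.axAndI _ _)) h₁) h₂

theorem andL (h : Deriv Γ (φ.and ψ)) : Deriv Γ φ :=
  .mp (.ipc (.axAndL _ _)) h

theorem andR (h : Deriv Γ (φ.and ψ)) : Deriv Γ ψ :=
  .mp (.ipc (.axAndR _ _)) h

theorem orL (h : Deriv Γ φ) : Deriv Γ (φ.or ψ) :=
  .mp (.ipc (.axOrL _ _)) h

theorem orR (h : Deriv Γ ψ) : Deriv Γ (φ.or ψ) :=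
  .mp (.ipc (.axOrR _ _)) h

theorem or_imp (h₁ : Deriv (φ :: Γ) χ) (h₂ : Deriv (ψ :: Γ) χ) : Deriv Γ ((φ.or ψ).imp χ) :=
  .mp (.mp (.ipc (.axOrE φ ψ χ)) h₁.imp_intro) h₂.imp_intro

theorem orE (h : Deriv Γ (φ.or ψ)) (h₁ : Deriv (φ :: Γ) χ) (h₂ : Deriv (ψ :: Γ) χ) :
    Deriv Γ χ :=
  .mp (or_imp h₁ h₂) h

theorem neg_of_imp (h : Deriv Γ (φ.imp ψ)) (hψ : Deriv Γ ψ.neg) : Deriv Γ φ.neg :=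
  imp_intro (.mp hψ.cons (.mp h.cons head))

theorem notNot_intro (h : Deriv Γ φ) : Deriv Γ φ.neg.neg :=
  imp_intro (.mp head h.cons)

theorem notNot_mp (h : Deriv Γ (φ.imp ψ)) (hφ : Deriv Γ φ.neg.neg) : Deriv Γ ψ.neg.neg :=
  imp_intro (.mp hφ.cons (neg_of_imp h.cons head))

theorem neg_of_neg_neg_neg (h : Deriv Γ φ.neg.neg.neg) : Deriv Γ φ.neg :=
  neg_of_imp (imp_intro (notNot_intro head)) h

theorem notNot_em : Deriv Γ (φ.or φ.neg).neg.neg :=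
  imp_intro (.mp head (orR (neg_of_imp (.ipc (.axOrL _ _)) head)))

theorem and_mono (h₁ : Deriv Γ (φ.imp φ')) (h₂ : Deriv Γ (ψ.imp ψ')) :
    Deriv Γ ((φ.and ψ).imp (φ'.and ψ')) :=
  imp_intro (andI (.mp h₁.cons head.andL) (.mp h₂.cons head.andR))

theorem or_mono (h₁ : Deriv Γ (φ.imp φ')) (h₂ : Deriv Γ (ψ.imp ψ')) :
    Deriv Γ ((φ.or ψ).imp (φ'.or ψ')) :=
  or_imp (orL (.mp h₁.cons head)) (orR (.mp h₂.cons head))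

theorem imp_mono (h₁ : Deriv Γ (φ'.imp φ)) (h₂ : Deriv Γ (ψ.imp ψ')) :
    Deriv Γ ((φ.imp ψ).imp (φ'.imp ψ')) :=
  imp_intro (imp_intro (.mp h₂.cons.cons (.mp head.cons (.mp h₁.cons.cons head))))

theorem of_mem_conjList {L : List PropForm} (hφ : φ ∈ L) (h : Deriv Γ (conjList L)) :
    Deriv Γ φ := by
  induction L with
  | nil => simp at hφ
  | cons ψ L ih =>
    rcases List.mem_cons.mp hφ with rfl | hφ
    · exact andL h
    · exact ih hφ (andR h)

theorem of_forall_choice (ds : List (PropForm × PropForm))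
    (hds : ∀ d ∈ ds, Deriv Γ (d.1.or d.2))
    (h : ∀ Δ, Γ ⊆ Δ → (∀ d ∈ ds, d.1 ∈ Δ ∨ d.2 ∈ Δ) → Deriv Δ χ) : Deriv Γ χ := by
  induction ds generalizing Γ with
  | nil => exact h Γ (List.Subset.refl Γ) (by simp)
  | cons d ds ih =>
    have branch (φ : PropForm) (hφ : φ = d.1 ∨ φ = d.2) : Deriv (φ :: Γ) χ := by
      refine ih (fun e he => (hds e (.tail _ he)).cons) fun Δ hΔ hch =>
        h Δ (fun x hx => hΔ (.tail _ hx)) ?_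
      rintro e (_ | ⟨_, he⟩)
      · rcases hφ with rfl | rfl
        exacts [.inl (hΔ (.head _)), .inr (hΔ (.head _))]
      · exact hch e he
    exact orE (hds d (.head _)) (branch _ (.inl rfl)) (branch _ (.inr rfl))

end Deriv

def PropForm.signed : Bool → PropForm → PropForm
  | true, χ => χ
  | false, χ => χ.neg

theorem PropForm.eval_subst (σ : ℕ → PropForm) (v : ℕ → Bool) (χ : PropForm) :
    (χ.subst σ).eval v = χ.eval fun a => (σ a).eval v := by
  induction χ <;> simp [PropForm.subst, PropForm.eval, *]

theorem PropForm.eval_congr {v w : ℕ → Bool} {χ : PropForm} (h : ∀ a ∈ χ.vars, v a = w a) :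
    χ.eval v = χ.eval w := by
  induction χ <;> simp_all [PropForm.eval, PropForm.vars]

theorem monoIn_empty (b : Bool) (χ : PropForm) : MonoIn ∅ b χ := by
  induction χ generalizing b <;> simp [MonoIn, *]

namespace Deriv

variable {Γ : List PropForm} {φ ψ : PropForm} {b c : Bool}

theorem signed_and (h₁ : Deriv Γ (φ.signed b)) (h₂ : Deriv Γ (ψ.signed c)) :
    Deriv Γ ((φ.and ψ).signed (b && c)) := by
  cases b <;> cases c
  · exact imp_intro (.mp h₁.cons head.andL)
  · exact imp_intro (.mp h₁.cons head.andL)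
  · exact imp_intro (.mp h₂.cons head.andR)
  · exact andI h₁ h₂

theorem signed_or (h₁ : Deriv Γ (φ.signed b)) (h₂ : Deriv Γ (ψ.signed c)) :
    Deriv Γ ((φ.or ψ).signed (b || c)) := by
  cases b <;> cases c
  · exact or_imp (.mp h₁.cons head) (.mp h₂.cons head)
  · exact orR h₂
  · exact orL h₁
  · exact orL h₁

theorem signed_imp (h₁ : Deriv Γ (φ.signed b)) (h₂ : Deriv Γ (ψ.signed c)) :
    Deriv Γ ((φ.imp ψ).signed (!b || c)) := by
  cases b <;> cases c
  · exact imp_intro (exfalso (.mp h₁.cons head))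
  · exact imp_intro (exfalso (.mp h₁.cons head))
  · exact imp_intro (.mp h₂.cons (.mp head h₁.cons))
  · exact imp_intro h₂.cons

/-- Kalmár's lemma. -/
theorem signed_eval (v : ℕ → Bool) {χ : PropForm}
    (h : ∀ a ∈ χ.vars, Deriv Γ ((var a).signed (v a))) : Deriv Γ (χ.signed (χ.eval v)) := by
  induction χ with
  | tr => exact .ipc .axTr
  | fls => exact imp_intro head
  | var a => exact h a (by simp [vars])
  | and _ _ ih₁ ih₂ =>
    exact signed_and (ih₁ fun a ha => h a (by simp [vars, ha]))
      (ih₂ fun a ha => h a (by simp [vars, ha]))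
  | or _ _ ih₁ ih₂ =>
    exact signed_or (ih₁ fun a ha => h a (by simp [vars, ha]))
      (ih₂ fun a ha => h a (by simp [vars, ha]))
  | imp _ _ ih₁ ih₂ =>
    exact signed_imp (ih₁ fun a ha => h a (by simp [vars, ha]))
      (ih₂ fun a ha => h a (by simp [vars, ha]))

/-- The variables in `L` still have to be decided; each is discharged by `¬¬(p ∨ ¬p)`. -/
theorem notNot_of_taut_of_decided {θ : PropForm} (hθ : θ.Taut) (L : List ℕ) (v : ℕ → Bool)
    (h : ∀ a ∈ θ.vars, a ∉ L → Deriv Γ ((var a).signed (v a))) : Deriv Γ θ.neg.neg := by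
  induction L generalizing Γ v with
  | nil =>
    have hθv := signed_eval v fun a ha => h a ha List.not_mem_nil
    rw [hθ v] at hθv
    exact notNot_intro hθv
  | cons a L ih =>
    have branch (b : Bool) : Deriv ((var a).signed b :: Γ) θ.neg.neg := by
      refine ih (Function.update v a b) fun c hc hcL => ?_
      by_cases hca : c = a
      · subst hca
        simpa using head
      · rw [Function.update_of_ne hca]
        exact (h c hc (by simp [hca, hcL])).cons
    exact neg_of_neg_neg_neg (notNot_mp (or_imp (branch true) (branch false)) notNot_em)

theorem glivenko {θ : PropForm} (hθ : θ.Taut) : Deriv Γ θ.neg.neg :=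
  notNot_of_taut_of_decided hθ θ.vars.toList (fun _ => false)
    fun _ ha haL => absurd (Finset.mem_toList.mpr ha) haL

/-- `b` is the polarity of the position of `χ`; at negative positions the implication flips. -/
theorem subst_imp_subst {P : Finset ℕ} {σ τ : ℕ → PropForm}
    (hστ : ∀ a, Deriv Γ ((σ a).imp (τ a))) (hτσ : ∀ a ∉ P, Deriv Γ ((τ a).imp (σ a)))
    {χ : PropForm} {b : Bool} (hχ : MonoIn P b χ) :
    Deriv Γ ((χ.subst (cond b σ τ)).imp (χ.subst (cond b τ σ))) := by
  induction χ generalizing b with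
  | tr => exact imp_self
  | fls => exact imp_self
  | var a =>
    cases b
    · exact hτσ a (by simpa [MonoIn] using hχ)
    · exact hστ a
  | and _ _ ih₁ ih₂ => exact and_mono (ih₁ hχ.1) (ih₂ hχ.2)
  | or _ _ ih₁ ih₂ => exact or_mono (ih₁ hχ.1) (ih₂ hχ.2)
  | imp _ _ ih₁ ih₂ =>
    cases b
    · exact imp_mono (ih₁ hχ.1) (ih₂ hχ.2)
    · exact imp_mono (ih₁ hχ.1) (ih₂ hχ.2)

end Deriv

def constSubst (P : Finset ℕ) (u : ℕ → Bool) : ℕ → PropForm := fun a =>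
  if a ∈ P then (if u a then .tr else .fls) else .var a

theorem taut_subst_constSubst {P : Finset ℕ} {φ ψ : PropForm} (hshared : φ.vars ∩ ψ.vars ⊆ P)
    (htaut : (φ.imp ψ).Taut) {u : ℕ → Bool} (hu : φ.eval u = true) :
    (ψ.subst (constSubst P u)).Taut := by
  intro w
  let x : ℕ → Bool := fun a => if a ∈ P ∨ a ∈ φ.vars then u a else w a
  have hφx : φ.eval x = true := by
    rw [← hu]
    exact eval_congr fun a ha => by simp [x, ha]
  have hψx : ψ.eval x = true := by simpa [PropForm.eval, hφx] using htaut x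
  rw [eval_subst, ← hψx]
  refine eval_congr fun a ha => ?_
  by_cases haP : a ∈ P
  · cases hua : u a <;> simp [constSubst, x, haP, hua, PropForm.eval]
  · have haφ : a ∉ φ.vars := fun h => haP (hshared (Finset.mem_inter.mpr ⟨h, ha⟩))
    simp [constSubst, x, haP, haφ, PropForm.eval]

/-- The substitution `σ_I` for the branch `Γ`: there `¬pᵢ` is equivalent to `⊥` when `pᵢ ∈ Γ`. -/
def branchSubst (m : ℕ) (Γ : List PropForm) : ℕ → PropForm := fun a =>
  if a < m then (if var a ∈ Γ then .fls else (var a).neg) else .var a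

section Branch

variable {m : ℕ} {Γ : List PropForm} {φ ψ : PropForm}

theorem Deriv.neg_negSubst_of_unsat (hunsat : ∀ v, (φ.subst (branchSubst m Γ)).eval v = false) :
    Deriv Γ (φ.subst (negSubst m)).neg := by
  have hneg : Deriv Γ (φ.subst (branchSubst m Γ)).neg :=
    .neg_of_neg_neg_neg (.glivenko fun v => by simp [PropForm.neg, PropForm.eval, hunsat v])
  have hequiv (a : ℕ) : Deriv Γ ((negSubst m a).imp (branchSubst m Γ a)) ∧
      Deriv Γ ((branchSubst m Γ a).imp (negSubst m a)) := by
    by_cases h : a < m ∧ var a ∈ Γ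
    · simp only [negSubst, branchSubst, if_pos h.1, if_pos h.2]
      exact ⟨.imp_intro (.mp .head (Deriv.hyp h.2).cons), .imp_intro (.exfalso .head)⟩
    · have heq : branchSubst m Γ a = negSubst m a := by
        grind [negSubst, branchSubst]
      rw [heq]
      exact ⟨.imp_self, .imp_self⟩
  exact .neg_of_imp (.subst_imp_subst (b := true) (fun a => (hequiv a).1)
    (fun a _ => (hequiv a).2) (monoIn_empty true φ)) hneg

theorem Deriv.notNot_shiftSubst_of_sat (hp : ∀ i < m, var i ∈ Γ ∨ var (m + i) ∈ Γ)
    (hshared : φ.vars ∩ ψ.vars ⊆ Finset.range m) (hmono : MonoIn (Finset.range m) true ψ)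
    (htaut : (φ.imp ψ).Taut) {v : ℕ → Bool} (hv : (φ.subst (branchSubst m Γ)).eval v = true) :
    Deriv Γ (ψ.subst (shiftSubst m)).neg.neg := by
  set u : ℕ → Bool := fun a => (branchSubst m Γ a).eval v with hu
  have hconst : Deriv Γ (ψ.subst (constSubst (Finset.range m) u)).neg.neg :=
    .glivenko (taut_subst_constSubst hshared htaut (by rwa [eval_subst] at hv))
  -- `u a` is true only if `pₐ ∉ Γ`, and then `qₐ ∈ Γ`.
  have hσ (a : ℕ) : Deriv Γ ((constSubst (Finset.range m) u a).imp (shiftSubst m a)) := by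
    by_cases ha : a < m
    · cases hua : u a
      · simpa [constSubst, shiftSubst, ha, hua] using Deriv.imp_intro (.exfalso .head)
      · have hpa : var a ∉ Γ := fun hin => by simp [hu, branchSubst, ha, hin, eval] at hua
        have hqa := (hp a ha).resolve_left hpa
        simpa [constSubst, shiftSubst, ha, hua] using Deriv.imp_intro (Deriv.hyp hqa).cons
    · simpa [constSubst, shiftSubst, ha] using Deriv.imp_self
  have hτ (a : ℕ) (ha : a ∉ Finset.range m) :
      Deriv Γ ((shiftSubst m a).imp (constSubst (Finset.range m) u a)) := by
    simpa [constSubst, shiftSubst, Finset.mem_range.not.mp ha] using Deriv.imp_self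
  exact .notNot_mp (.subst_imp_subst (b := true) hσ hτ hmono) hconst

theorem Deriv.neg_negSubst_or_notNot_shiftSubst (hp : ∀ i < m, var i ∈ Γ ∨ var (m + i) ∈ Γ)
    (hshared : φ.vars ∩ ψ.vars ⊆ Finset.range m) (hmono : MonoIn (Finset.range m) true ψ)
    (htaut : (φ.imp ψ).Taut) :
    Deriv Γ (((φ.subst (negSubst m)).neg).or ((ψ.subst (shiftSubst m)).neg.neg)) := by
  by_cases hsat : ∃ v, (φ.subst (branchSubst m Γ)).eval v = true
  · obtain ⟨v, hv⟩ := hsat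
    exact .orR (.notNot_shiftSubst_of_sat hp hshared hmono htaut hv)
  · exact .orL (.neg_negSubst_of_unsat (by simpa using hsat))

end Branch

theorem CPC_to_IPC_monotone_translation_general (m : ℕ) (φ ψ : PropForm)
    (hshared : φ.vars ∩ ψ.vars ⊆ Finset.range m)
    (hmono : MonoIn (Finset.range m) true ψ)
    (htaut : (φ.imp ψ).Taut) :
    IPC ((pairDisjConj m).imp
      (((φ.subst (negSubst m)).neg).or ((ψ.subst (shiftSubst m)).neg.neg))) := by
  let pairs := (List.range m).map fun i => (var i, var (m + i))
  have hdisj : ∀ d ∈ pairs, Deriv [pairDisjConj m] (d.1.or d.2) := by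
    simp only [pairs, List.mem_map, List.mem_range]
    rintro _ ⟨i, hi, rfl⟩
    exact .of_mem_conjList (List.mem_map.mpr ⟨i, List.mem_range.mpr hi, rfl⟩) .head
  refine (Deriv.imp_intro (Deriv.of_forall_choice pairs hdisj fun Δ _ hΔ => ?_)).toIPC
  have hp (i : ℕ) (hi : i < m) : var i ∈ Δ ∨ var (m + i) ∈ Δ :=
    hΔ _ (List.mem_map.mpr ⟨i, List.mem_range.mpr hi, rfl⟩)
  exact .neg_negSubst_or_notNot_shiftSubst hp hshared hmono htaut

/-- If `CPC ⊢ φ(p,r) → ψ(p,s)` and `ψ` is monotone in the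
variables `p = p₀,…,p_{m-1}`, then, with fresh variables `qᵢ := p_{m+i}`,
`IPC ⊢ ⋀ᵢ(pᵢ ∨ qᵢ) → (¬φ(¬p,r) ∨ ¬¬ψ(q,s))`. -/
theorem CPC_to_IPC_monotone_translation (m : ℕ) (φ ψ : PropForm)
    (hshared : φ.vars ∩ ψ.vars ⊆ Finset.range m)
    (hfresh : ∀ a ∈ φ.vars ∪ ψ.vars, a < m ∨ 2 * m ≤ a)
    (hmono : MonoIn (Finset.range m) true ψ)
    (htaut : (φ.imp ψ).Taut) :
    IPC ((pairDisjConj m).imp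
      (((φ.subst (negSubst m)).neg).or ((ψ.subst (shiftSubst m)).neg.neg))) :=
  CPC_to_IPC_monotone_translation_general m φ ψ hshared hmono htaut
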